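/- arXiv:1103.1859 — 4 statements merged into one kernel-verified Lean document; each statement's English description precedes it below -/
import Mathlib

section
/- Consider an LC circuit with Kirchhoff constraint matrix K = (K_Lᵀ, K_Cᵀ)ᵀ ∈ ℝ^{n×m} partitioned into inductor rows K_L ∈ ℝ^{n_L×m} and capacitor rows K_C ∈ ℝ^{n_C×m}, and loop matrix K₂ ∈ ℝ^{n×(n−m)} with full column rank and range(K₂) = ker(Kᵀ). Let L = diag(L₁,…,L_{n_L},0,…,0) with L_i > 0 on inductor branches. If K_Cᵀ has trivial kernel (equivalently, rank(K_Cᵀ) = n_C), then K₂ᵀ L K₂ is invertible. -/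
/-!
If `K₂ᵀ L K₂ y = 0`, the quadratic form `(K₂ y)ᵀ L (K₂ y)` vanishes, and since `L` is positive
semidefinite this forces `L K₂ y = 0`, i.e. the loop current `x = K₂ y` carries no current through
any inductor. As `x ∈ range K₂ = ker Kᵀ`, the Kirchhoff constraint then reads `K_Cᵀ x_C = 0`, so
`x_C = 0` as well; hence `x = 0` and `y = 0` because `K₂` has full column rank.
-/

open Matrix
open scoped ComplexOrder

theorem Matrix.PosSemidef.mulVec_mulVec_eq_zero_of_conjTranspose_mul_mul_mulVec_eq_zero
    {m n 𝕜 : Type*} [Fintype m] [Fintype n] [RCLike 𝕜] {D : Matrix n n 𝕜} (hD : D.PosSemidef)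
    (B : Matrix n m 𝕜) {y : m → 𝕜} (h : (Bᴴ * D * B) *ᵥ y = 0) :
    D *ᵥ (B *ᵥ y) = 0 := by
  rw [← hD.dotProduct_mulVec_zero_iff]
  have hq : star y ⬝ᵥ (Bᴴ * D * B) *ᵥ y = 0 := by rw [h, dotProduct_zero]
  rwa [← mulVec_mulVec, ← mulVec_mulVec, dotProduct_mulVec, ← star_mulVec] at hq

theorem Matrix.eq_zero_of_transpose_fromRows_mulVec_eq_zero
    {m₁ m₂ n R : Type*} [Fintype m₁] [Fintype m₂] [CommSemiring R]
    {A : Matrix m₁ n R} {C : Matrix m₂ n R} (hC : ∀ v, Cᵀ *ᵥ v = 0 → v = 0)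
    {x : m₁ ⊕ m₂ → R} (hx : (fromRows A C)ᵀ *ᵥ x = 0) (hx₁ : x ∘ Sum.inl = 0) : x = 0 := by
  rw [transpose_fromRows, fromCols_mulVec, hx₁, mulVec_zero, zero_add] at hx
  have hx₂ : x ∘ Sum.inr = 0 := hC _ hx
  ext (i | j)
  exacts [congr_fun hx₁ i, congr_fun hx₂ j]

/-- Proposition 1: for an LC circuit with `K = (K_Lᵀ, K_Cᵀ)ᵀ`, loop matrix `K₂`
with full column rank and `range(K₂) = ker(Kᵀ)`, inductance matrix
`L = diag(L_L, 0)` with positive entries on inductor branches, if `K_Cᵀ` has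
trivial kernel then `K₂ᵀ L K₂` is invertible. -/
theorem stmt2 {nL nC m k : ℕ}
    (KL : Matrix (Fin nL) (Fin m) ℝ) (KC : Matrix (Fin nC) (Fin m) ℝ)
    (K₂ : Matrix (Fin nL ⊕ Fin nC) (Fin k) ℝ)
    (d : Fin nL ⊕ Fin nC → ℝ)
    (hdL : ∀ i : Fin nL, 0 < d (Sum.inl i))
    (hdC : ∀ j : Fin nC, d (Sum.inr j) = 0)
    (hrank : Function.Injective K₂.mulVec)
    (hrange : ∀ x : Fin nL ⊕ Fin nC → ℝ,
      (∃ y, K₂.mulVec y = x) ↔ (Matrix.fromRows KL KC).transpose.mulVec x = 0)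
    (hKC : ∀ vC : Fin nC → ℝ, KC.transpose.mulVec vC = 0 → vC = 0) :
    IsUnit (K₂.transpose * Matrix.diagonal d * K₂) := by
  have hd : 0 ≤ d := by
    rintro (i | j)
    exacts [(hdL i).le, (hdC j).ge]
  rw [← mulVec_injective_iff_isUnit, ← coe_mulVecLin, ← LinearMap.ker_eq_bot,
    ker_mulVecLin_eq_bot_iff]
  intro y hy
  rw [← conjTranspose_eq_transpose_of_trivial] at hy
  have hLx : diagonal d *ᵥ (K₂ *ᵥ y) = 0 :=
    (PosSemidef.diagonal hd).mulVec_mulVec_eq_zero_of_conjTranspose_mul_mul_mulVec_eq_zero K₂ hy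
  have hxL : (K₂ *ᵥ y) ∘ Sum.inl = 0 := funext fun i => by
    simpa [mulVec_diagonal, (hdL i).ne'] using congr_fun hLx (Sum.inl i)
  have hx : K₂ *ᵥ y = 0 :=
    eq_zero_of_transpose_fromRows_mulVec_eq_zero hKC ((hrange _).1 ⟨y, rfl⟩) hxL
  exact hrank (by rw [hx, mulVec_zero])
end

section
/- Suppose (q, v, p): [0,T] → ℝⁿ × ℝⁿ × ℝⁿ solves the constrained Euler-Lagrange system: ∂L/∂q(q,v) − dp/dt + f_L(q,v,t) ∈ range(K), dq/dt = v, p = ∂L/∂v(q,v), Kᵀv = 0. Let K₂⁺ be a left inverse of K₂ (K₂⁺K₂ = I) and set q̃ = K₂⁺q, ṽ = K₂⁺v, p̃ = K₂ᵀp. If q and v take values in range(K₂) and ker(K₂ᵀ) = range(K), then (q̃, ṽ, p̃) solves the reduced system: dp̃/dt = ∂L^M/∂q̃ + f_L^M, dq̃/dt = ṽ, p̃ = ∂L^M/∂ṽ. -/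
open Matrix Set

/-
On `range K₂` the map `K₂ K₂⁺` is the identity, so the reduced gradients and force evaluated at
`(K₂⁺q, K₂⁺v)` are those of the full system at `(q, v)`. Applying the linear map `K₂ᵀ` to the full
equations then gives the reduced ones: it commutes with `d/dt`, and it kills the constraint force,
which lies in `range K = ker K₂ᵀ`.
-/

theorem HasDerivAt.matrix_mulVec {𝕜 ι κ : Type*} [NontriviallyNormedField 𝕜] [Fintype ι]
    [Fintype κ] (M : Matrix κ ι 𝕜) {f : 𝕜 → ι → 𝕜} {f' : ι → 𝕜} {t : 𝕜}
    (hf : HasDerivAt f f' t) :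
    HasDerivAt (fun s => M *ᵥ f s) (M *ᵥ f') t :=
  hasDerivAt_pi.2 fun i => by
    simpa only [mulVec, dotProduct, Finset.sum_apply] using
      HasDerivAt.fun_sum fun j _ => (hasDerivAt_pi.1 hf j).const_mul (M i j)

theorem Matrix.mulVec_mulVec_of_mul_eq_one {ι κ R : Type*} [Fintype ι] [Fintype κ]
    [DecidableEq κ] [Semiring R] {A : Matrix ι κ R} {B : Matrix κ ι R} (hBA : B * A = 1)
    {x : ι → R} (hx : ∃ a, A *ᵥ a = x) : A *ᵥ (B *ᵥ x) = x := by
  obtain ⟨a, rfl⟩ := hx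
  rw [mulVec_mulVec, mulVec_mulVec, Matrix.mul_assoc, hBA, Matrix.mul_one]

theorem Matrix.mulVec_eq_add_of_mulVec_sub_add_eq_zero {ι κ R : Type*} [Fintype ι]
    [NonUnitalNonAssocRing R] {M : Matrix κ ι R} {a b c : ι → R} (h : M *ᵥ (a - b + c) = 0) :
    M *ᵥ b = M *ᵥ a + M *ᵥ c := by
  rw [mulVec_add, mulVec_sub] at h
  exact (eq_of_sub_eq_zero (by rw [← h]; abel)).symm

theorem stmt6_general {n m k : ℕ} (T : ℝ)
    (K : Matrix (Fin n) (Fin m) ℝ) (K₂ : Matrix (Fin n) (Fin k) ℝ)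
    (K₂p : Matrix (Fin k) (Fin n) ℝ) (hleft : K₂p * K₂ = 1)
    (Lq Lv : (Fin n → ℝ) → (Fin n → ℝ) → (Fin n → ℝ))
    (fL : (Fin n → ℝ) → (Fin n → ℝ) → ℝ → (Fin n → ℝ))
    (hker : ∀ x : Fin n → ℝ, K₂.transpose.mulVec x = 0 ↔ ∃ y, K.mulVec y = x)
    (q v p dp : ℝ → Fin n → ℝ)
    -- dq/dt = v :
    (hq : ∀ t ∈ Icc 0 T, HasDerivAt q (v t) t)
    -- dp/dt exists :
    (hp : ∀ t ∈ Icc 0 T, HasDerivAt p (dp t) t)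
    -- ∂L/∂q(q,v) − dp/dt + f_L(q,v,t) ∈ range(K) :
    (hKVL : ∀ t ∈ Icc 0 T, ∃ y : Fin m → ℝ,
      Lq (q t) (v t) - dp t + fL (q t) (v t) t = K.mulVec y)
    -- p = ∂L/∂v(q,v) :
    (hleg : ∀ t ∈ Icc 0 T, p t = Lv (q t) (v t))
    -- q and v take values in range(K₂) :
    (hqrange : ∀ t ∈ Icc 0 T, ∃ a, K₂.mulVec a = q t)
    (hvrange : ∀ t ∈ Icc 0 T, ∃ a, K₂.mulVec a = v t) :
    -- conclusions for qr = K₂⁺q, vr = K₂⁺v, pr = K₂ᵀp :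
    (∀ t ∈ Icc 0 T, HasDerivAt (fun s => K₂p.mulVec (q s)) (K₂p.mulVec (v t)) t) ∧
    (∀ t ∈ Icc 0 T, HasDerivAt (fun s => K₂.transpose.mulVec (p s))
      (K₂.transpose.mulVec
          (Lq (K₂.mulVec (K₂p.mulVec (q t))) (K₂.mulVec (K₂p.mulVec (v t)))) +
       K₂.transpose.mulVec
          (fL (K₂.mulVec (K₂p.mulVec (q t))) (K₂.mulVec (K₂p.mulVec (v t))) t)) t) ∧
    (∀ t ∈ Icc 0 T, K₂.transpose.mulVec (p t) =
      K₂.transpose.mulVec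
        (Lv (K₂.mulVec (K₂p.mulVec (q t))) (K₂.mulVec (K₂p.mulVec (v t))))) := by
  refine ⟨fun t ht => (hq t ht).matrix_mulVec K₂p, fun t ht => ?_, fun t ht => ?_⟩
  all_goals rw [mulVec_mulVec_of_mul_eq_one hleft (hqrange t ht),
    mulVec_mulVec_of_mul_eq_one hleft (hvrange t ht)]
  · obtain ⟨y, hy⟩ := hKVL t ht
    have hforce : K₂ᵀ *ᵥ (Lq (q t) (v t) - dp t + fL (q t) (v t) t) = 0 :=
      (hker _).mpr ⟨y, hy.symm⟩
    rw [← mulVec_eq_add_of_mulVec_sub_add_eq_zero hforce]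
    exact (hp t ht).matrix_mulVec K₂ᵀ
  · rw [hleg t ht]

/-- Equivalence theorem, direction (ii): a solution `(q, v, p)` of the full
constrained Euler–Lagrange system with `q, v` taking values in `range(K₂)`
yields, via `qr = K₂⁺q`, `vr = K₂⁺v`, `pr = K₂ᵀp`, a solution of the reduced
system.  `Lq, Lv` are the partial gradients of the Lagrangian; by the chain rule
the reduced gradients are `K₂ᵀ Lq(K₂qr, K₂vr)` and `K₂ᵀ Lv(K₂qr, K₂vr)`, and
`f_L^M(qr,vr,t) = K₂ᵀ f_L(K₂qr, K₂vr, t)`. -/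
theorem stmt6 {n m k : ℕ} (T : ℝ) (hT : 0 ≤ T)
    (K : Matrix (Fin n) (Fin m) ℝ) (K₂ : Matrix (Fin n) (Fin k) ℝ)
    (K₂p : Matrix (Fin k) (Fin n) ℝ) (hleft : K₂p * K₂ = 1)
    (Lq Lv : (Fin n → ℝ) → (Fin n → ℝ) → (Fin n → ℝ))
    (fL : (Fin n → ℝ) → (Fin n → ℝ) → ℝ → (Fin n → ℝ))
    (hker : ∀ x : Fin n → ℝ, K₂.transpose.mulVec x = 0 ↔ ∃ y, K.mulVec y = x)
    (q v p dp : ℝ → Fin n → ℝ)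
    -- dq/dt = v :
    (hq : ∀ t ∈ Icc 0 T, HasDerivAt q (v t) t)
    -- dp/dt exists :
    (hp : ∀ t ∈ Icc 0 T, HasDerivAt p (dp t) t)
    -- ∂L/∂q(q,v) − dp/dt + f_L(q,v,t) ∈ range(K) :
    (hKVL : ∀ t ∈ Icc 0 T, ∃ y : Fin m → ℝ,
      Lq (q t) (v t) - dp t + fL (q t) (v t) t = K.mulVec y)
    -- p = ∂L/∂v(q,v) :
    (hleg : ∀ t ∈ Icc 0 T, p t = Lv (q t) (v t))
    -- Kᵀ v = 0 :
    (hKCL : ∀ t ∈ Icc 0 T, K.transpose.mulVec (v t) = 0)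
    -- q and v take values in range(K₂) :
    (hqrange : ∀ t ∈ Icc 0 T, ∃ a, K₂.mulVec a = q t)
    (hvrange : ∀ t ∈ Icc 0 T, ∃ a, K₂.mulVec a = v t) :
    -- conclusions for qr = K₂⁺q, vr = K₂⁺v, pr = K₂ᵀp :
    (∀ t ∈ Icc 0 T, HasDerivAt (fun s => K₂p.mulVec (q s)) (K₂p.mulVec (v t)) t) ∧
    (∀ t ∈ Icc 0 T, HasDerivAt (fun s => K₂.transpose.mulVec (p s))
      (K₂.transpose.mulVec
          (Lq (K₂.mulVec (K₂p.mulVec (q t))) (K₂.mulVec (K₂p.mulVec (v t)))) +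
       K₂.transpose.mulVec
          (fL (K₂.mulVec (K₂p.mulVec (q t))) (K₂.mulVec (K₂p.mulVec (v t))) t)) t) ∧
    (∀ t ∈ Icc 0 T, K₂.transpose.mulVec (p t) =
      K₂.transpose.mulVec
        (Lv (K₂.mulVec (K₂p.mulVec (q t))) (K₂.mulVec (K₂p.mulVec (v t))))) :=
  stmt6_general T K K₂ K₂p hleft Lq Lv fL hker q v p dp hq hp hKVL hleg hqrange hvrange
end

section
/- The forward-Euler variational iteration for a linear circuit, given by the block matrix A = [[I, 0, 0], [0, K₂ᵀLK₂, −I], [h·K₂ᵀCK₂, h·K₂ᵀ diag(R) K₂, I]] acting on (q̃, ṽ, p̃), is uniquely solvable (A is invertible) if and only if the matrix K₂ᵀ(L + h·diag(R))K₂ is invertible. -/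
/-! The iteration matrix is block lower triangular with an identity corner, so it is invertible
iff its lower-right block `[[K₂ᵀLK₂, -I], [h K₂ᵀdiag(R)K₂, I]]` is; the Schur complement of the
identity in that block is `K₂ᵀLK₂ + h K₂ᵀdiag(R)K₂ = K₂ᵀ(L + h diag(R))K₂`. -/

open Matrix

theorem Matrix.isUnit_fromBlocks_neg_one_one_iff {n α : Type*} [Fintype n] [DecidableEq n]
    [CommRing α] (A B : Matrix n n α) :
    IsUnit (fromBlocks A (-1 : Matrix n n α) B 1) ↔ IsUnit (A + B) := by
  let : Invertible (1 : Matrix n n α) := invertibleOne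
  rw [isUnit_fromBlocks_iff_of_invertible₂₂, invOf_one, Matrix.mul_one, neg_one_mul,
    sub_neg_eq_add]

theorem stmt7_general {n k : ℕ} (h : ℝ)
    (L C : Matrix (Fin n) (Fin n) ℝ) (R : Fin n → ℝ)
    (K₂ : Matrix (Fin n) (Fin k) ℝ) :
    IsUnit (Matrix.fromBlocks
      (1 : Matrix (Fin k) (Fin k) ℝ) (0 : Matrix (Fin k) (Fin k ⊕ Fin k) ℝ)
      (Matrix.fromRows (0 : Matrix (Fin k) (Fin k) ℝ)
        (h • (K₂.transpose * C * K₂)))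
      (Matrix.fromBlocks
        (K₂.transpose * L * K₂) (-1 : Matrix (Fin k) (Fin k) ℝ)
        (h • (K₂.transpose * Matrix.diagonal R * K₂)) (1 : Matrix (Fin k) (Fin k) ℝ)))
    ↔ IsUnit (K₂.transpose * (L + h • Matrix.diagonal R) * K₂) := by
  rw [isUnit_fromBlocks_zero₁₂, isUnit_fromBlocks_neg_one_one_iff, Matrix.mul_add,
    Matrix.add_mul, Matrix.mul_smul, Matrix.smul_mul]
  exact and_iff_right isUnit_one

/-- Proposition 2: the forward-Euler variational iteration matrix
`A = [[I,0,0],[0,K₂ᵀLK₂,−I],[h K₂ᵀCK₂, h K₂ᵀdiag(R)K₂, I]]` is invertible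
if and only if `K₂ᵀ(L + h diag(R))K₂` is invertible. -/
theorem stmt7 {n k : ℕ} (h : ℝ) (hh : 0 < h)
    (L C : Matrix (Fin n) (Fin n) ℝ) (R : Fin n → ℝ)
    (K₂ : Matrix (Fin n) (Fin k) ℝ) :
    IsUnit (Matrix.fromBlocks
      (1 : Matrix (Fin k) (Fin k) ℝ) (0 : Matrix (Fin k) (Fin k ⊕ Fin k) ℝ)
      (Matrix.fromRows (0 : Matrix (Fin k) (Fin k) ℝ)
        (h • (K₂.transpose * C * K₂)))
      (Matrix.fromBlocks
        (K₂.transpose * L * K₂) (-1 : Matrix (Fin k) (Fin k) ℝ)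
        (h • (K₂.transpose * Matrix.diagonal R * K₂)) (1 : Matrix (Fin k) (Fin k) ℝ)))
    ↔ IsUnit (K₂.transpose * (L + h • Matrix.diagonal R) * K₂) :=
  stmt7_general h L C R K₂
end

section
/- The midpoint-rule variational iteration matrix A = [[I, −hI, 0], [0, K₂ᵀLK₂, −½I], [½h·K₂ᵀCK₂, h·K₂ᵀ diag(R) K₂, I]] is invertible if the matrix K₂ᵀ(2L + h·diag(R) + ½h²C)K₂ is invertible. -/
open Matrix

/-! Eliminating along the identity block in the top-left corner and then along the one in the
bottom-right corner, `det A = det (K₂ᵀLK₂ + ½ (h K₂ᵀ diag(R) K₂ + ½ h² K₂ᵀCK₂))`, and the matrix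
inside is `½ K₂ᵀ(2L + h diag(R) + ½h²C)K₂`. -/

namespace Matrix

theorem fromBlocks_sub_fromRows_zero_mul_fromCols_zero {l m n m' n' α : Type*} [Fintype l]
    [Ring α] (A : Matrix m m' α) (B : Matrix m n' α) (C : Matrix n m' α)
    (D : Matrix n n' α) (X : Matrix n l α) (Y : Matrix l m' α) :
    fromBlocks A B C D - fromRows 0 X * fromCols Y 0 = fromBlocks A B (C - X * Y) D := by
  rw [fromRows_mul_fromCols]
  ext (i | i) (j | j) <;> simp

variable {m n α : Type*} [Fintype m] [Fintype n] [DecidableEq m] [DecidableEq n] [CommRing α]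

theorem isUnit_fromBlocks_one₁₁_iff {B : Matrix m n α} {C : Matrix n m α} {D : Matrix n n α} :
    IsUnit (fromBlocks 1 B C D) ↔ IsUnit (D - C * B) := by
  rw [isUnit_iff_isUnit_det, det_fromBlocks_one₁₁, ← isUnit_iff_isUnit_det]

theorem isUnit_fromBlocks_one₂₂_iff {A : Matrix m m α} {B : Matrix m n α} {C : Matrix n m α} :
    IsUnit (fromBlocks A B C 1) ↔ IsUnit (A - B * C) := by
  rw [isUnit_iff_isUnit_det, det_fromBlocks_one₂₂, ← isUnit_iff_isUnit_det]

end Matrix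

theorem stmt9_general {n k : ℕ} (h : ℝ)
    (L C : Matrix (Fin n) (Fin n) ℝ) (R : Fin n → ℝ)
    (K₂ : Matrix (Fin n) (Fin k) ℝ)
    (hreg : IsUnit (K₂.transpose *
      ((2 : ℝ) • L + h • Matrix.diagonal R + ((1/2) * h^2) • C) * K₂)) :
    IsUnit (Matrix.fromBlocks
      (1 : Matrix (Fin k) (Fin k) ℝ)
      (Matrix.fromCols (-(h • (1 : Matrix (Fin k) (Fin k) ℝ)))
        (0 : Matrix (Fin k) (Fin k) ℝ))
      (Matrix.fromRows (0 : Matrix (Fin k) (Fin k) ℝ)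
        (((1:ℝ)/2 * h) • (K₂.transpose * C * K₂)))
      (Matrix.fromBlocks
        (K₂.transpose * L * K₂) (-((1/2 : ℝ) • (1 : Matrix (Fin k) (Fin k) ℝ)))
        (h • (K₂.transpose * Matrix.diagonal R * K₂))
        (1 : Matrix (Fin k) (Fin k) ℝ))) := by
  rw [isUnit_fromBlocks_one₁₁_iff, fromBlocks_sub_fromRows_zero_mul_fromCols_zero,
    isUnit_fromBlocks_one₂₂_iff]
  have hschur : K₂ᵀ * L * K₂ - -((1 / 2 : ℝ) • 1) *
      (h • (K₂ᵀ * diagonal R * K₂) - ((1 : ℝ) / 2 * h) • (K₂ᵀ * C * K₂) * -(h • 1)) =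
      (1 / 2 : ℝ) • (K₂ᵀ * ((2 : ℝ) • L + h • diagonal R + ((1 / 2) * h ^ 2) • C) * K₂) := by
    simp only [Matrix.mul_add, Matrix.add_mul, Matrix.mul_smul, Matrix.smul_mul, Matrix.neg_mul,
      Matrix.mul_neg, Matrix.one_mul, Matrix.mul_one, smul_sub, smul_neg]
    module
  rw [hschur]
  exact hreg.smul (Units.mk0 (1 / 2 : ℝ) (by norm_num))

/-- Proposition 4: the midpoint-rule variational iteration matrix
`A = [[I,−hI,0],[0,K₂ᵀLK₂,−½I],[½h K₂ᵀCK₂, h K₂ᵀdiag(R)K₂, I]]` is invertible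
if `K₂ᵀ(2L + h diag(R) + ½h²C)K₂` is invertible. -/
theorem stmt9 {n k : ℕ} (h : ℝ) (hh : 0 < h)
    (L C : Matrix (Fin n) (Fin n) ℝ) (R : Fin n → ℝ)
    (hLsymm : L.IsSymm) (hCsymm : C.IsSymm)
    (K₂ : Matrix (Fin n) (Fin k) ℝ)
    (hreg : IsUnit (K₂.transpose *
      ((2 : ℝ) • L + h • Matrix.diagonal R + ((1/2) * h^2) • C) * K₂)) :
    IsUnit (Matrix.fromBlocks
      (1 : Matrix (Fin k) (Fin k) ℝ)
      (Matrix.fromCols (-(h • (1 : Matrix (Fin k) (Fin k) ℝ)))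
        (0 : Matrix (Fin k) (Fin k) ℝ))
      (Matrix.fromRows (0 : Matrix (Fin k) (Fin k) ℝ)
        (((1:ℝ)/2 * h) • (K₂.transpose * C * K₂)))
      (Matrix.fromBlocks
        (K₂.transpose * L * K₂) (-((1/2 : ℝ) • (1 : Matrix (Fin k) (Fin k) ℝ)))
        (h • (K₂.transpose * Matrix.diagonal R * K₂))
        (1 : Matrix (Fin k) (Fin k) ℝ))) :=
  stmt9_general h L C R K₂ hreg
end
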